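/- Let G be a directed graph in which every vertex except the source s has out-degree at most 2, with the farthest min-cut sequence C₁, C₂, …, C_{k+1} defined by S₁={s}, C_i = FMC(S_i,t,G), S_{i+1} = (A_i ∪ out(A_i,G))∖{t}. Then |C_{i+1}| ≤ 2|C_i| for each i, and hence if maxflow(s,t,G) = f (so |C₁| = f), the final cut satisfies |C_{k+1}| ≤ 2^k·f. -/

import Mathlib

open Finset

/-- `p` is a nonempty directed path/walk (as a list of edges) from `s` to `t`
using only edges of `G`. -/
def IsPath {V : Type*} (G : Finset (V × V)) (s t : V) (p : List (V × V)) : Prop :=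
  p ≠ [] ∧ (∀ e ∈ p, e ∈ G) ∧ List.Chain' (fun e f => e.2 = f.1) p ∧
    p.head?.map Prod.fst = some s ∧ p.getLast?.map Prod.snd = some t

/-- `G` contains `r` pairwise edge-disjoint paths from `s` to `t` (unit capacities). -/
def EDP {V : Type*} (G : Finset (V × V)) (s t : V) (r : ℕ) : Prop :=
  ∃ ps : Fin r → List (V × V), (∀ i, IsPath G s t (ps i)) ∧
    ∀ i j, i ≠ j → ∀ e, e ∈ ps i → e ∉ ps j

/-- Max-flow with unit capacities: the maximum number of edge-disjoint `s`-`t` paths. -/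
noncomputable def maxFlow {V : Type*} (G : Finset (V × V)) (s t : V) : ℕ :=
  sSup {r | EDP G s t r}

/-- Directed reachability in the edge set `G`. -/
def Reach {V : Type*} (G : Finset (V × V)) (s t : V) : Prop :=
  Relation.ReflTransGen (fun a b => (a, b) ∈ G) s t

def inEdges {V : Type*} [DecidableEq V] (G : Finset (V × V)) (v : V) : Finset (V × V) :=
  G.filter fun e => e.2 = v

def outDeg {V : Type*} [DecidableEq V] (G : Finset (V × V)) (v : V) : ℕ :=
  (G.filter fun e => e.1 = v).card

/-- `H` is a `(lam, k)` fault-tolerant bounded-flow-preserver of `G` w.r.t. source `s`: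
for every set `F` of at most `k` failed edges and every vertex `t`, the `s`-`t` max-flow
of `H \ F` equals that of `G \ F` whenever the latter is at most `lam`, and is at least
`lam` otherwise. -/
def IsFTBFP {V : Type*} [DecidableEq V] (G H : Finset (V × V)) (s : V) (lam k : ℕ) : Prop :=
  H ⊆ G ∧ ∀ F : Finset (V × V), F.card ≤ k → ∀ t : V,
    (maxFlow (G \ F) s t ≤ lam → maxFlow (H \ F) s t = maxFlow (G \ F) s t) ∧
    (lam < maxFlow (G \ F) s t → lam ≤ maxFlow (H \ F) s t)

/-- `H` is a `j`-fault-tolerant reachability subgraph of `G` w.r.t. source `s`. -/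
def IsFTRS {V : Type*} [DecidableEq V] (G H : Finset (V × V)) (s : V) (j : ℕ) : Prop :=
  H ⊆ G ∧ ∀ F : Finset (V × V), F.card ≤ j → ∀ t : V,
    (Reach (H \ F) s t ↔ Reach (G \ F) s t)

def IsCut {V : Type*} (A : Finset V) (s t : V) : Prop := s ∈ A ∧ t ∉ A

/-- Number of edges of `G` from `A` to its complement. -/
def cutVal {V : Type*} [DecidableEq V] (G : Finset (V × V)) (A : Finset V) : ℕ :=
  (G.filter fun e => e.1 ∈ A ∧ e.2 ∉ A).card

def IsMinCut {V : Type*} [DecidableEq V] (G : Finset (V × V)) (s t : V) (A : Finset V) : Prop :=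
  IsCut A s t ∧ ∀ B : Finset V, IsCut B s t → cutVal G A ≤ cutVal G B

def IsCutS {V : Type*} (S : Finset V) (t : V) (A : Finset V) : Prop := S ⊆ A ∧ t ∉ A

def IsMinCutS {V : Type*} [DecidableEq V] (G : Finset (V × V)) (S : Finset V) (t : V)
    (A : Finset V) : Prop :=
  IsCutS S t A ∧ ∀ B : Finset V, IsCutS S t B → cutVal G A ≤ cutVal G B

/-- Farthest min-cut: the min-cut whose source side contains the source side of
every min-cut. -/
def IsFMC {V : Type*} [DecidableEq V] (G : Finset (V × V)) (S : Finset V) (t : V)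
    (A : Finset V) : Prop :=
  IsMinCutS G S t A ∧ ∀ B : Finset V, IsMinCutS G S t B → B ⊆ A

/-- Vertices outside `A` with an in-edge from `A`. -/
def outSet {V : Type*} [DecidableEq V] (G : Finset (V × V)) (A : Finset V) : Finset V :=
  (G.filter fun e => e.1 ∈ A ∧ e.2 ∉ A).image Prod.snd

/-!
Doubling: `A_{i+1}` is a minimum cut for `S_{i+1}`, and `S_{i+1}` is itself such a cut. An edge
leaving `S_{i+1}` either goes from `A_i` straight to `t`, or leaves a vertex of
`out(A_i) \ {t}`; such a vertex has out-degree at most `2` (it is not `s ∈ A_i`) and is the head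
of an edge of `C_i` not ending in `t`. Hence `|C_{i+1}| ≤ 2 |C_i|`.

Base: `|C_1| ≤ maxflow(s, t, G)` is the nontrivial half of Menger's theorem. A maximum `0/1`
flow admits no augmenting path, so the vertices reachable from `s` in the residual graph form a
cut saturated by the flow; and a `0/1` flow of value `r` splits into `r` edge-disjoint paths.
-/

open Relation

section Generic

variable {α : Type*}

lemma card_filter_erase_add_ite [DecidableEq α] {s : Finset α} {a : α} (ha : a ∈ s)
    (p : α → Prop) [DecidablePred p] :
    #{x ∈ s.erase a | p x} + (if p a then 1 else 0) = #{x ∈ s | p x} := by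
  rw [filter_erase]
  split_ifs with hp
  · exact card_erase_add_one (mem_filter.2 ⟨ha, hp⟩)
  · rw [erase_eq_of_notMem fun h => hp (mem_filter.1 h).2, add_zero]

lemma exists_closed_of_not_reflTransGen [Fintype α] {r : α → α → Prop} {a b : α}
    (h : ¬ ReflTransGen r a b) :
    ∃ R : Finset α, a ∈ R ∧ b ∉ R ∧ ∀ x ∈ R, ∀ y, r x y → y ∈ R := by
  classical
  refine ⟨({x | ReflTransGen r a x} : Finset α), by simp [ReflTransGen.refl], by simpa using h,
    fun x hx y hxy => ?_⟩
  simp only [mem_filter, mem_univ, true_and] at hx ⊢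
  exact hx.tail hxy

lemma exists_nodup_isChain_of_reflTransGen {r : α → α → Prop} {a b : α}
    (h : ReflTransGen r a b) :
    ∃ l : List α, (a :: l).IsChain r ∧ (a :: l).Nodup ∧ (a :: l).getLast? = some b := by
  induction h using ReflTransGen.head_induction_on with
  | refl => exact ⟨[], .singleton _, List.nodup_singleton _, rfl⟩
  | @head a c hac _ ih =>
    obtain ⟨l, hch, hnd, hlast⟩ := ih
    by_cases ha : a ∈ c :: l
    · obtain ⟨l₁, l₂, hl⟩ := List.append_of_mem ha
      rw [hl] at hch hnd hlast
      refine ⟨l₂, (List.isChain_append.1 hch).2.1, hnd.of_append_right, ?_⟩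
      rwa [List.getLast?_append_of_ne_nil _ (List.cons_ne_nil _ _)] at hlast
    · exact ⟨c :: l, hch.cons_cons hac, List.nodup_cons.2 ⟨ha, hnd⟩,
        by rwa [List.getLast?_cons_cons]⟩

end Generic

section Path

variable {V : Type*} {F G : Finset (V × V)} {s t : V}

lemma IsPath.mono {p : List (V × V)} (hFG : F ⊆ G) (hp : IsPath F s t p) : IsPath G s t p :=
  ⟨hp.1, fun e he => hFG (hp.2.1 e he), hp.2.2⟩

lemma isPath_singleton (h : (s, t) ∈ F) : IsPath F s t [(s, t)] :=
  ⟨List.cons_ne_nil _ _, by simpa using h, List.isChain_singleton _, rfl, rfl⟩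

lemma IsPath.cons {u : V} {p : List (V × V)} (h : (u, s) ∈ F) (hp : IsPath F s t p) :
    IsPath F u t ((u, s) :: p) := by
  obtain ⟨hne, hmem, hch, hhead, hlast⟩ := hp
  obtain ⟨e, p, rfl⟩ := List.exists_cons_of_ne_nil hne
  simp only [List.head?_cons, Option.map_some, Option.some.injEq] at hhead
  refine ⟨List.cons_ne_nil _ _, ?_, hch.cons_cons hhead.symm, rfl, ?_⟩
  · simpa [h] using hmem
  · rwa [List.getLast?_cons_cons]

end Path

section Flow

variable {V : Type*} [DecidableEq V]

def excess (F : Finset (V × V)) (v : V) : ℤ := #{e ∈ F | e.1 = v} - #{e ∈ F | e.2 = v}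

lemma excess_erase {F : Finset (V × V)} {e : V × V} (he : e ∈ F) (v : V) :
    excess (F.erase e) v =
      excess F v - (if e.1 = v then 1 else 0) + (if e.2 = v then 1 else 0) := by
  have h1 := card_filter_erase_add_ite he (·.1 = v)
  have h2 := card_filter_erase_add_ite he (·.2 = v)
  simp only [excess, ← h1, ← h2]
  split_ifs <;> push_cast <;> ring

lemma excess_insert {F : Finset (V × V)} {e : V × V} (he : e ∉ F) (v : V) :
    excess (insert e F) v =
      excess F v + (if e.1 = v then 1 else 0) - (if e.2 = v then 1 else 0) := by
  rw [← erase_insert he, excess_erase (mem_insert_self e F), erase_insert he]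
  ring

lemma sum_excess (F : Finset (V × V)) (R : Finset V) :
    ∑ v ∈ R, excess F v =
      #{e ∈ F | e.1 ∈ R ∧ e.2 ∉ R} - #{e ∈ F | e.1 ∉ R ∧ e.2 ∈ R} := by
  have hout := card_filter_add_card_filter_not (s := {e ∈ F | e.1 ∈ R}) (·.2 ∈ R)
  have hin := card_filter_add_card_filter_not (s := {e ∈ F | e.2 ∈ R}) (·.1 ∈ R)
  simp only [filter_filter] at hout hin
  simp only [excess, sum_sub_distrib, ← Nat.cast_sum, sum_card_fiberwise_eq_card_filter,
    ← hout, ← hin]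
  have hboth : #{e ∈ F | e.2 ∈ R ∧ e.1 ∈ R} = #{e ∈ F | e.1 ∈ R ∧ e.2 ∈ R} := by
    simp only [and_comm]
  have hin' : #{e ∈ F | e.2 ∈ R ∧ e.1 ∉ R} = #{e ∈ F | e.1 ∉ R ∧ e.2 ∈ R} := by
    simp only [and_comm]
  push_cast
  rw [hboth, hin']
  ring

variable {F G : Finset (V × V)} {s t : V} {r : ℕ}

/-- A `0/1` flow of value `r` from `s` to `t`, given by its support `F`. -/
def IsFlow (F : Finset (V × V)) (s t : V) (r : ℕ) : Prop :=
  (∀ v, v ≠ s → v ≠ t → excess F v = 0) ∧ excess F s = r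

lemma IsFlow.card_out_sub_card_in (hF : IsFlow F s t r) {R : Finset V} (hs : s ∈ R)
    (ht : t ∉ R) :
    (#{e ∈ F | e.1 ∈ R ∧ e.2 ∉ R} : ℤ) - #{e ∈ F | e.1 ∉ R ∧ e.2 ∈ R} = r := by
  rw [← sum_excess, ← hF.2]
  exact sum_eq_single_of_mem s hs fun v hv hvs => hF.1 v hvs (ne_of_mem_of_not_mem hv ht)

lemma IsFlow.reach [Fintype V] (hF : IsFlow F s t r) (hr : 0 < r) : Reach F s t := by
  by_contra h
  obtain ⟨R, hs, ht, hR⟩ := exists_closed_of_not_reflTransGen h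
  have hout : {e ∈ F | e.1 ∈ R ∧ e.2 ∉ R} = ∅ :=
    filter_eq_empty_iff.2 fun e he ⟨h1, h2⟩ => h2 (hR _ h1 _ he)
  have := hF.card_out_sub_card_in hs ht
  rw [hout, card_empty] at this
  omega

lemma exists_isPath_of_isChain (t : V) :
    ∀ (l : List V) (u : V) (F : Finset (V × V)), l ≠ [] →
      (u :: l).IsChain (fun a b => (a, b) ∈ F) → (u :: l).Nodup →
      (u :: l).getLast? = some t →
      ∃ p F', IsPath F u t p ∧ F' ⊆ F ∧ (∀ e ∈ p, e ∉ F') ∧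
        ∀ v, excess F' v = excess F v - (if u = v then 1 else 0) + (if t = v then 1 else 0)
  | [], _, _, hl, _, _, _ => absurd rfl hl
  | [w], u, F, _, hch, _, hlast => by
    obtain rfl : w = t := by simpa using hlast
    have he : (u, w) ∈ F := (List.isChain_pair.1 hch)
    refine ⟨[(u, w)], F.erase (u, w), isPath_singleton he, erase_subset _ _, by simp, ?_⟩
    exact excess_erase he
  | w :: x :: l, u, F, _, hch, hnd, hlast => by
    have he : (u, w) ∈ F := (List.isChain_cons_cons.1 hch).1
    have hu : u ∉ w :: x :: l := (List.nodup_cons.1 hnd).1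
    have hch' : (w :: x :: l).IsChain fun a b => (a, b) ∈ F.erase (u, w) :=
      (List.isChain_cons_cons.1 hch).2.imp_of_mem_imp fun a b ha _ hab =>
        mem_erase.2 ⟨fun h => hu ((Prod.mk.inj h).1 ▸ ha), hab⟩
    obtain ⟨p, F', hp, hF', hpF', hex⟩ := exists_isPath_of_isChain t (x :: l) w (F.erase (u, w))
      (List.cons_ne_nil _ _) hch' (List.nodup_cons.1 hnd).2
      (by rwa [List.getLast?_cons_cons] at hlast)
    refine ⟨(u, w) :: p, F', (hp.mono (erase_subset _ _)).cons he, hF'.trans (erase_subset _ _),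
      ?_, fun v => ?_⟩
    · rintro e (_ | ⟨_, he'⟩)
      · exact fun h => notMem_erase _ _ (hF' h)
      · exact hpF' e he'
    · rw [hex, excess_erase he]
      ring

lemma IsFlow.exists_path [Fintype V] (hF : IsFlow F s t (r + 1)) (hst : s ≠ t) :
    ∃ p F', IsPath F s t p ∧ F' ⊆ F ∧ (∀ e ∈ p, e ∉ F') ∧ IsFlow F' s t r := by
  obtain ⟨l, hch, hnd, hlast⟩ := exists_nodup_isChain_of_reflTransGen (hF.reach r.succ_pos)
  have hl : l ≠ [] := by rintro rfl; exact hst (by simpa using hlast)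
  obtain ⟨p, F', hp, hF', hpF', hex⟩ := exists_isPath_of_isChain t l s F hl hch hnd hlast
  refine ⟨p, F', hp, hF', hpF', fun v hvs hvt => ?_, ?_⟩
  · simp [hex, hF.1 v hvs hvt, Ne.symm hvs, Ne.symm hvt]
  · simp [hex, hF.2, hst.symm]

lemma IsFlow.edp [Fintype V] (hst : s ≠ t) : ∀ {r : ℕ} {F : Finset (V × V)},
    IsFlow F s t r → EDP F s t r
  | 0, _, _ => ⟨Fin.elim0, fun i => i.elim0, fun i => i.elim0⟩
  | r + 1, F, hF => by
    obtain ⟨p, F', hp, hF', hpF', hflow⟩ := hF.exists_path hst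
    obtain ⟨ps, hps, hdisj⟩ := hflow.edp hst
    refine ⟨Fin.cons p ps, Fin.cases hp fun i => (hps i).mono hF', ?_⟩
    have hfirst : ∀ i, ∀ e ∈ p, e ∉ ps i := fun i e he he' => hpF' e he ((hps i).2.1 e he')
    intro i j hij e
    cases i using Fin.cases <;> cases j using Fin.cases
    · exact absurd rfl hij
    · exact hfirst _ e
    · exact fun he he' => hfirst _ e he' he
    · exact hdisj _ _ (fun h => hij (congrArg _ h)) e

omit [DecidableEq V] in
lemma EDP.mono (hFG : F ⊆ G) (h : EDP F s t r) : EDP G s t r :=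
  let ⟨ps, hps, hdisj⟩ := h
  ⟨ps, fun i => (hps i).mono hFG, hdisj⟩

omit [DecidableEq V] in
/-- The first edges of edge-disjoint paths are distinct edges of `G`. -/
lemma EDP.le_card (h : EDP G s t r) : r ≤ #G := by
  obtain ⟨ps, hps, hdisj⟩ := h
  have hmem i : (ps i).head (hps i).1 ∈ ps i := List.head_mem _
  simpa using card_le_card_of_injOn (s := univ) (fun i => (ps i).head (hps i).1)
    (fun i _ => (hps i).2.1 _ (hmem i)) fun i _ j _ (hij : (ps i).head _ = (ps j).head _) =>
      by_contra fun hne => hdisj i j hne _ (hmem i) (hij ▸ hmem j)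

def Residual (G F : Finset (V × V)) (a b : V) : Prop :=
  ((a, b) ∈ G ∧ (a, b) ∉ F) ∨ (b, a) ∈ F

/-- Augments the flow by one unit along the residual edge `a → b`. -/
def pushFlow (F : Finset (V × V)) (a b : V) : Finset (V × V) :=
  if (b, a) ∈ F then F.erase (b, a) else insert (a, b) F

lemma pushFlow_subset {a b : V} (hFG : F ⊆ G) (h : Residual G F a b) : pushFlow F a b ⊆ G := by
  unfold pushFlow
  split_ifs with hba
  · exact (erase_subset _ _).trans hFG
  · exact insert_subset (h.resolve_right hba).1 hFG

lemma excess_pushFlow {a b : V} (h : Residual G F a b) (v : V) :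
    excess (pushFlow F a b) v =
      excess F v + (if a = v then 1 else 0) - (if b = v then 1 else 0) := by
  by_cases hba : (b, a) ∈ F
  · rw [pushFlow, if_pos hba, excess_erase hba]
    ring
  · rw [pushFlow, if_neg hba, excess_insert (h.resolve_right hba).2]

lemma mem_pushFlow_iff {a b x y : V} (hx : x ≠ a) (hy : y ≠ a) :
    (x, y) ∈ pushFlow F a b ↔ (x, y) ∈ F := by
  unfold pushFlow
  split_ifs <;> simp [hx, hy]

lemma Residual.pushFlow {a b x y : V} (h : Residual G F x y) (hx : x ≠ a) (hy : y ≠ a) :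
    Residual G (pushFlow F a b) x y := by
  rwa [Residual, mem_pushFlow_iff hx hy, mem_pushFlow_iff hy hx]

lemma exists_augment_of_isChain (t : V) :
    ∀ (l : List V) (u : V) (F : Finset (V × V)), F ⊆ G →
      (u :: l).IsChain (Residual G F) → (u :: l).Nodup → (u :: l).getLast? = some t →
      ∃ F' ⊆ G, ∀ v,
        excess F' v = excess F v + (if u = v then 1 else 0) - (if t = v then 1 else 0)
  | [], u, F, hFG, _, _, hlast => by
    obtain rfl : u = t := by simpa using hlast
    exact ⟨F, hFG, fun v => by ring⟩
  | w :: l, u, F, hFG, hch, hnd, hlast => by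
    have hres := (List.isChain_cons_cons.1 hch).1
    have hu : u ∉ w :: l := (List.nodup_cons.1 hnd).1
    have hch' : (w :: l).IsChain (Residual G (pushFlow F u w)) :=
      (List.isChain_cons_cons.1 hch).2.imp_of_mem_imp fun x y hx hy hxy =>
        hxy.pushFlow (ne_of_mem_of_not_mem hx hu) (ne_of_mem_of_not_mem hy hu)
    obtain ⟨F', hF', hex⟩ := exists_augment_of_isChain t l w (pushFlow F u w)
      (pushFlow_subset hFG hres) hch' (List.nodup_cons.1 hnd).2
      (by rwa [List.getLast?_cons_cons] at hlast)
    exact ⟨F', hF', fun v => by rw [hex, excess_pushFlow hres]; ring⟩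

lemma IsFlow.exists_augment (hFG : F ⊆ G) (hF : IsFlow F s t r) (hst : s ≠ t)
    (h : ReflTransGen (Residual G F) s t) : ∃ F' ⊆ G, IsFlow F' s t (r + 1) := by
  obtain ⟨l, hch, hnd, hlast⟩ := exists_nodup_isChain_of_reflTransGen h
  obtain ⟨F', hF', hex⟩ := exists_augment_of_isChain t l s F hFG hch hnd hlast
  refine ⟨F', hF', fun v hvs hvt => ?_, ?_⟩
  · simp [hex, hF.1 v hvs hvt, Ne.symm hvs, Ne.symm hvt]
  · simp [hex, hF.2, hst.symm]

/-- Max-flow/min-cut, in the direction needed here: a maximum flow leaves a cut, the vertices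
reachable from `s` in the residual graph, whose edges are all saturated. -/
lemma exists_isCut_cutVal_le_maxFlow [Fintype V] (G : Finset (V × V)) (hst : s ≠ t) :
    ∃ R, IsCut R s t ∧ cutVal G R ≤ maxFlow G s t := by
  set T := {r | ∃ F ⊆ G, IsFlow F s t r}
  have hT : BddAbove T := ⟨#G, fun r ⟨F, hFG, hF⟩ => ((hF.edp hst).mono hFG).le_card⟩
  obtain ⟨F, hFG, hF⟩ : sSup T ∈ T :=
    Nat.sSup_mem ⟨0, ∅, empty_subset G, by simp [IsFlow, excess]⟩ hT
  have hmax : ¬ ReflTransGen (Residual G F) s t := fun h => by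
    obtain ⟨F', hF'G, hF'⟩ := hF.exists_augment hFG hst h
    have := le_csSup hT ⟨F', hF'G, hF'⟩
    omega
  obtain ⟨R, hs, ht, hR⟩ := exists_closed_of_not_reflTransGen hmax
  have hout : {e ∈ G | e.1 ∈ R ∧ e.2 ∉ R} = {e ∈ F | e.1 ∈ R ∧ e.2 ∉ R} := by
    ext e
    simp only [mem_filter]
    refine ⟨fun ⟨heG, h1, h2⟩ => ⟨?_, h1, h2⟩, fun ⟨heF, h⟩ => ⟨hFG heF, h⟩⟩
    by_contra heF
    exact h2 (hR _ h1 _ (Or.inl ⟨heG, heF⟩))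
  have hin : {e ∈ F | e.1 ∉ R ∧ e.2 ∈ R} = ∅ :=
    filter_eq_empty_iff.2 fun e he ⟨h1, h2⟩ => h1 (hR _ h2 _ (Or.inr he))
  have hval := hF.card_out_sub_card_in hs ht
  rw [hin, card_empty, Nat.cast_zero, sub_zero, Nat.cast_inj, ← hout] at hval
  refine ⟨R, ⟨hs, ht⟩, ?_⟩
  rw [cutVal, hval]
  exact le_csSup ⟨#G, fun r hr => hr.le_card⟩ ((hF.edp hst).mono hFG)

end Flow

section Doubling

variable {V : Type*} [DecidableEq V] {G : Finset (V × V)} {A : Finset V} {t : V}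

lemma notMem_of_mem_outSet {v : V} (hv : v ∈ outSet G A) : v ∉ A := by
  obtain ⟨e, he, rfl⟩ := mem_image.1 hv
  exact (mem_filter.1 he).2.2

lemma card_filter_fst_mem_le {X : Finset V} {d : ℕ} (h : ∀ v ∈ X, outDeg G v ≤ d) :
    #{e ∈ G | e.1 ∈ X} ≤ d * #X := by
  rw [← sum_card_fiberwise_eq_card_filter, mul_comm]
  exact sum_le_card_nsmul X _ d h

lemma card_outSet_sdiff_le :
    #(outSet G A \ {t}) ≤ #{e ∈ {e ∈ G | e.1 ∈ A ∧ e.2 ∉ A} | e.2 ≠ t} := by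
  refine le_trans (card_le_card fun v hv => ?_) (card_image_le (f := Prod.snd))
  obtain ⟨hv, hvt⟩ := mem_sdiff.1 hv
  obtain ⟨e, he, rfl⟩ := mem_image.1 hv
  exact mem_image_of_mem _ (mem_filter.2 ⟨he, by simpa using hvt⟩)

lemma cutVal_union_outSet_sdiff_le {d : ℕ} (hd : 1 ≤ d) (ht : t ∉ A)
    (hdeg : ∀ v ∈ outSet G A, v ≠ t → outDeg G v ≤ d) :
    cutVal G ((A ∪ outSet G A) \ {t}) ≤ d * cutVal G A := by
  set B := (A ∪ outSet G A) \ {t}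
  set C := {e ∈ G | e.1 ∈ A ∧ e.2 ∉ A}
  have hsplit : {e ∈ G | e.1 ∈ B ∧ e.2 ∉ B} ⊆
      {e ∈ C | e.2 = t} ∪ {e ∈ G | e.1 ∈ outSet G A \ {t}} := by
    intro e he
    simp only [B, C, mem_filter, mem_union, mem_sdiff, mem_singleton, not_and_or, not_or,
      not_not] at he ⊢
    obtain ⟨heG, ⟨hA | hAout, het⟩, h2⟩ := he
    · have h2A : e.2 ∉ A := fun h => by grind
      refine Or.inl ⟨⟨heG, hA, h2A⟩, ?_⟩
      have : e.2 ∈ outSet G A := mem_image_of_mem Prod.snd (mem_filter.2 ⟨heG, hA, h2A⟩)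
      grind
    · exact Or.inr ⟨heG, hAout, het⟩
  have hout : #{e ∈ G | e.1 ∈ outSet G A \ {t}} ≤ d * #{e ∈ C | e.2 ≠ t} :=
    (card_filter_fst_mem_le fun v hv =>
      hdeg v (mem_sdiff.1 hv).1 (by simpa using (mem_sdiff.1 hv).2)).trans
        (Nat.mul_le_mul_left _ card_outSet_sdiff_le)
  have hC := card_filter_add_card_filter_not (s := C) (·.2 = t)
  calc cutVal G B ≤ #{e ∈ C | e.2 = t} + #{e ∈ G | e.1 ∈ outSet G A \ {t}} :=
        (card_le_card hsplit).trans (card_union_le _ _)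
    _ ≤ d * cutVal G A := by
      rw [cutVal, ← hC]
      nlinarith

end Doubling

/-- in a graph where every vertex other than `s` has out-degree at most
`2`, the farthest min-cut sequence `C₁,…,C_{k+1}` (with `S₁ = {s}`,
`C_i = FMC(S_i,t,G)`, `S_{i+1} = (A_i ∪ out(A_i)) ∖ {t}`) satisfies
`|C_{i+1}| ≤ 2|C_i|`, and hence `|C_{k+1}| ≤ 2^k·f` where `f = maxflow(s,t,G)`. -/
theorem stmt_15 {V : Type*} [Fintype V] [DecidableEq V]
    (G : Finset (V × V)) (s t : V) (hst : s ≠ t)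
    (hout : ∀ w : V, w ≠ s → outDeg G w ≤ 2)
    (k f : ℕ) (hf : maxFlow G s t = f)
    (S A : Fin (k + 1) → Finset V)
    (hS0 : S 0 = {s})
    (hFMC : ∀ i, IsFMC G (S i) t (A i))
    (hSsucc : ∀ i : Fin k,
      S i.succ = (A i.castSucc ∪ outSet G (A i.castSucc)) \ {t}) :
    (∀ i : Fin k, cutVal G (A i.succ) ≤ 2 * cutVal G (A i.castSucc)) ∧
    cutVal G (A (Fin.last k)) ≤ 2 ^ k * f := by
  have hmin i := (hFMC i).1
  have hsA i : s ∈ A i := (hmin i).1.1 <| by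
    induction i using Fin.induction with
    | zero => simp [hS0]
    | succ i ih => simp [hSsucc, (hmin _).1.1 ih, hst]
  have hdouble (i : Fin k) : cutVal G (A i.succ) ≤ 2 * cutVal G (A i.castSucc) := by
    refine ((hmin i.succ).2 _ ⟨subset_rfl, by simp [hSsucc]⟩).trans ?_
    rw [hSsucc]
    exact cutVal_union_outSet_sdiff_le one_le_two (hmin _).1.2 fun v hv _ =>
      hout v fun hvs => notMem_of_mem_outSet hv (hvs ▸ hsA _)
  refine ⟨hdouble, ?_⟩
  obtain ⟨R, hR, hRf⟩ := exists_isCut_cutVal_le_maxFlow G hst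
  have hbase : cutVal G (A 0) ≤ f :=
    hf ▸ ((hmin 0).2 R ⟨by simpa [hS0] using hR.1, hR.2⟩).trans hRf
  have hpow (i : Fin (k + 1)) : cutVal G (A i) ≤ 2 ^ (i : ℕ) * f := by
    induction i using Fin.induction with
    | zero => simpa using hbase
    | succ i ih =>
      rw [Fin.val_castSucc] at ih
      rw [Fin.val_succ, pow_succ]
      linarith [hdouble i]
  simpa using hpow (Fin.last k)
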